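/- arXiv:2502.00141 — 2 statements merged into one kernel-verified Lean document; each statement's English description precedes it below -/
import Mathlib

section
/- The ideal 𝔮 = (2, 1+ω) of 𝓞_K, where K = ℚ(√−17), satisfies 𝔮² = (2) (so 2 is ramified in K), and the ideal class of 𝔮 has order exactly 2 in the class group Cl(K); in particular this class is a square in Cl(K). -/
/-!
Put `x = 1 + ζ`, a root of `X² - 2X + 18`. Then `(2, x)² = (2)` and `(3, x)² (2, x) = (x)`, so
the class of `𝔮 = (2, x)` is killed by `2` and equals `[(3, x)]⁻²`. It remains that `𝔮` is not
principal. Identifying `K` with the quadratic algebra `ℚ ⊕ ℚω`, a generator `α = a + bω` would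
have norm `a² + 17b² = 2`; integrality of `α` makes its trace `t = 2a` an integer, hence also
`m = 34b` (its square `17(8 - t²)` is one), and `m² + 17t² = 136` has no integer solutions.
-/

open NumberField nonZeroDivisors

namespace QuadraticAlgebra

variable {R : Type*} [CommRing R] {a b : R}

theorem algebraNorm_eq_norm (z : QuadraticAlgebra R a b) : Algebra.norm R z = z.norm := by
  rw [Algebra.norm_apply, ← det_toLinearMap_eq_norm]
  rfl

theorem isIntegral_trace {z : QuadraticAlgebra R a b} (hz : IsIntegral ℤ z) :
    IsIntegral ℤ (trace z) := by
  have h : IsIntegral ℤ (z + star z) := hz.add (hz.map (starRingEnd _).toIntAlgHom)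
  rwa [← algebraMap_trace_eq_add_star, ← IsScalarTower.toAlgHom_apply ℤ,
    isIntegral_algHom_iff _ algebraMap_injective] at h

variable {F K : Type*} [Field F] {c : F} [Fact (∀ r, r ^ 2 ≠ c + 0 * r)]
  [Ring K] [Nontrivial K] [Algebra F K] {θ : K}

noncomputable def equivOfAdjoinEqTop (hθ : θ ^ 2 = algebraMap F K c)
    (hK : Algebra.adjoin F {θ} = ⊤) : QuadraticAlgebra F c 0 ≃ₐ[F] K :=
  let f : QuadraticAlgebra F c 0 →ₐ[F] K :=
    lift ⟨θ, by simp [← sq, hθ, Algebra.algebraMap_eq_smul_one]⟩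
  AlgEquiv.ofBijective f
    ⟨f.toRingHom.injective, by
      rw [← AlgHom.range_eq_top, eq_top_iff, ← hK, Algebra.adjoin_le_iff,
        Set.singleton_subset_iff]
      exact ⟨ω, by simp [f]⟩⟩

end QuadraticAlgebra

theorem Rat.exists_int_eq_of_sq_eq_int {q : ℚ} {n : ℤ} (h : q ^ 2 = n) : ∃ k : ℤ, q = k := by
  have : IsIntegral ℤ q := .of_pow two_pos (h ▸ isIntegral_algebraMap)
  obtain ⟨k, hk⟩ := IsIntegrallyClosed.isIntegral_iff.mp this
  exact ⟨k, hk.symm⟩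

namespace Ideal

theorem span_pair_mul_span_pair_eq_span_of_isCoprime {R : Type*} [CommRing R] {a b x : R}
    (hab : IsCoprime a b) (hx : x ∣ a * b) : span {a, x} * span {b, x} = span {x} := by
  obtain ⟨u, v, huv⟩ := hab
  rw [span_pair_mul_span_pair]
  apply le_antisymm
  · simp only [span_le, Set.insert_subset_iff, Set.singleton_subset_iff, SetLike.mem_coe,
      mem_span_singleton]
    exact ⟨hx, dvd_mul_left x a, dvd_mul_right x b, dvd_mul_right x x⟩
  · rw [span_singleton_le_iff_mem]
    have hmem : u * (a * x) + v * (x * b) ∈ span {a * b, a * x, x * b, x * x} :=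
      add_mem (mul_mem_left _ _ (subset_span (by simp)))
        (mul_mem_left _ _ (subset_span (by simp)))
    rwa [show u * (a * x) + v * (x * b) = x by linear_combination x * huv] at hmem

section

-- `x` plays the role of `1 + √-17`.
variable {R : Type*} [CommRing R] {x : R}

theorem span_pair_two_sq (hx : x ^ 2 = 2 * x - 18) : span {2, x} ^ 2 = span {(2 : R)} := by
  rw [sq, span_pair_mul_span_pair]
  apply le_antisymm
  · simp only [span_le, Set.insert_subset_iff, Set.singleton_subset_iff, SetLike.mem_coe,
      mem_span_singleton]
    exact ⟨dvd_mul_right 2 2, dvd_mul_right 2 x, dvd_mul_left 2 x,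
      ⟨x - 9, by linear_combination hx⟩⟩
  · rw [span_singleton_le_iff_mem]
    have hmem : x * 2 - x * x - 4 * (2 * 2) ∈ span {2 * 2, 2 * x, x * 2, x * x} :=
      sub_mem (sub_mem (subset_span (by simp)) (subset_span (by simp)))
        (mul_mem_left _ _ (subset_span (by simp)))
    rwa [show x * 2 - x * x - 4 * (2 * 2) = 2 by linear_combination -hx] at hmem

theorem span_pair_three_sq (hx : x ^ 2 = 2 * x - 18) : span {3, x} ^ 2 = span {(9 : R), x} := by
  rw [sq, span_pair_mul_span_pair]
  apply le_antisymm
  · simp only [span_le, Set.insert_subset_iff, Set.singleton_subset_iff, SetLike.mem_coe]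
    refine ⟨subset_span (by norm_num), mul_mem_left _ _ (subset_span (by simp)),
      mul_mem_right _ _ (subset_span (by simp)), mul_mem_left _ _ (subset_span (by simp))⟩
  · rw [show (3 * 3 : R) = 9 by norm_num]
    simp only [span_le, Set.insert_subset_iff, Set.singleton_subset_iff, SetLike.mem_coe]
    have hmem : 3 * x - x * x - 2 * 9 ∈ span {9, 3 * x, x * 3, x * x} :=
      sub_mem (sub_mem (subset_span (by simp)) (subset_span (by simp)))
        (mul_mem_left _ _ (subset_span (by simp)))
    rw [show 3 * x - x * x - 2 * 9 = x by linear_combination -hx] at hmem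
    exact ⟨subset_span (by simp), hmem⟩

theorem span_pair_three_sq_mul_span_pair_two (hx : x ^ 2 = 2 * x - 18) :
    span {3, x} ^ 2 * span {2, x} = span {x} := by
  rw [span_pair_three_sq hx]
  exact span_pair_mul_span_pair_eq_span_of_isCoprime ⟨1, -4, by norm_num⟩
    ⟨2 - x, by linear_combination hx⟩

end

end Ideal

namespace ClassGroup

variable {R : Type*} [CommRing R] [IsDedekindDomain R]

theorem orderOf_mk0_eq_two {I : Ideal R} (hI : I ∈ (Ideal R)⁰) (hnp : ¬ I.IsPrincipal)
    (hsq : (I ^ 2).IsPrincipal) : orderOf (mk0 ⟨I, hI⟩) = 2 := by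
  refine orderOf_eq_prime ?_ (fun h => hnp ((mk0_eq_one_iff hI).mp h))
  rw [← map_pow, mk0_eq_one_iff]
  exact hsq

theorem isSquare_mk0_of_sq_mul_isPrincipal {I J : Ideal R} (hI : I ∈ (Ideal R)⁰)
    (hJ : J ∈ (Ideal R)⁰) (h : (J ^ 2 * I).IsPrincipal) : IsSquare (mk0 ⟨I, hI⟩) := by
  have h1 : mk0 ⟨J, hJ⟩ ^ 2 * mk0 ⟨I, hI⟩ = 1 := by
    rw [← map_pow, ← map_mul, mk0_eq_one_iff]
    exact h
  rw [eq_inv_of_mul_eq_one_right h1]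
  exact (IsSquare.sq _).inv

end ClassGroup

theorem Int.sq_add_seventeen_mul_sq_ne (m t : ℤ) : m ^ 2 + 17 * t ^ 2 ≠ 136 := by
  intro h
  obtain ⟨k, rfl⟩ : (17 : ℤ) ∣ m :=
    Int.Prime.dvd_pow' (k := 2) (by norm_num) ⟨8 - t ^ 2, by push_cast; linarith⟩
  obtain rfl : k = 0 := by nlinarith [sq_nonneg t]
  have ht : -2 ≤ t ∧ t ≤ 2 := by constructor <;> nlinarith
  obtain ⟨ht₁, ht₂⟩ := ht
  interval_cases t <;> omega

-- Makes `QuadraticAlgebra ℚ (-17) 0` a field.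
instance : Fact (∀ r : ℚ, r ^ 2 ≠ -17 + 0 * r) := ⟨fun r h => by nlinarith [sq_nonneg r]⟩

theorem QuadraticAlgebra.norm_ne_two_of_isIntegral {z : QuadraticAlgebra ℚ (-17) 0}
    (hz : IsIntegral ℤ z) : z.norm ≠ 2 := by
  intro hnorm
  obtain ⟨t, ht⟩ := IsIntegrallyClosed.isIntegral_iff.mp (isIntegral_trace hz)
  rw [trace_def] at ht
  rw [norm_def] at hnorm
  have hsq : (34 * z.im) ^ 2 = ((17 * (8 - t ^ 2) : ℤ) : ℚ) := by
    push_cast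
    linear_combination 68 * hnorm + 17 * ((t : ℚ) + 2 * z.re) * ht
  obtain ⟨m, hm⟩ := Rat.exists_int_eq_of_sq_eq_int hsq
  refine Int.sq_add_seventeen_mul_sq_ne m t (Int.cast_injective (α := ℚ) ?_)
  rw [hm] at hsq
  push_cast at hsq ⊢
  linear_combination hsq

namespace SqrtNegSeventeen

variable {K : Type*} [Field K] [NumberField K] {ω : K}

theorem finrank_eq_two_of_sq_eq_neg_seventeen (hω : ω ^ 2 = -17)
    (hK : Algebra.adjoin ℚ {ω} = ⊤) : Module.finrank ℚ K = 2 := by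
  let e := QuadraticAlgebra.equivOfAdjoinEqTop (c := (-17 : ℚ)) (by simp [hω]) hK
  rw [← e.toLinearEquiv.finrank_eq, QuadraticAlgebra.finrank_eq_two]

theorem exists_isIntegral_norm_eq (hω : ω ^ 2 = -17) (hK : Algebra.adjoin ℚ {ω} = ⊤)
    (α : 𝓞 K) :
    ∃ z : QuadraticAlgebra ℚ (-17) 0, IsIntegral ℤ z ∧ (Algebra.norm ℤ α : ℚ) = z.norm := by
  let e := QuadraticAlgebra.equivOfAdjoinEqTop (c := (-17 : ℚ)) (by simp [hω]) hK
  refine ⟨e.symm α, α.isIntegral_coe.map (e.symm.toAlgHom.restrictScalars ℤ), ?_⟩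
  rw [Algebra.coe_norm_int, ← Algebra.norm_eq_of_algEquiv e.symm,
    QuadraticAlgebra.algebraNorm_eq_norm]

theorem natAbs_norm_ne_two (hω : ω ^ 2 = -17) (hK : Algebra.adjoin ℚ {ω} = ⊤) (α : 𝓞 K) :
    (Algebra.norm ℤ α).natAbs ≠ 2 := by
  obtain ⟨z, hz, hN⟩ := exists_isIntegral_norm_eq hω hK α
  have hpos : 0 ≤ z.norm := by
    rw [QuadraticAlgebra.norm_def]
    nlinarith [mul_self_nonneg z.re, mul_self_nonneg z.im]
  intro h
  rcases Int.natAbs_eq_iff.mp h with h2 | h2 <;> rw [h2] at hN <;> push_cast at hN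
  · exact QuadraticAlgebra.norm_ne_two_of_isIntegral hz hN.symm
  · linarith

theorem norm_two_eq_four (hω : ω ^ 2 = -17) (hK : Algebra.adjoin ℚ {ω} = ⊤) :
    Algebra.norm ℤ (2 : 𝓞 K) = 4 := by
  rw [← map_ofNat (algebraMap ℤ (𝓞 K)), Algebra.norm_algebraMap, RingOfIntegers.rank,
    finrank_eq_two_of_sq_eq_neg_seventeen hω hK]
  norm_num

theorem not_isPrincipal_of_sq_eq_span_two (hω : ω ^ 2 = -17) (hK : Algebra.adjoin ℚ {ω} = ⊤)
    {Q : Ideal (𝓞 K)} (hQ : Q ^ 2 = Ideal.span {2}) : ¬ Q.IsPrincipal := by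
  rintro ⟨α, rfl⟩
  rw [Ideal.submodule_span_eq] at hQ
  have h4 : (Algebra.norm ℤ α).natAbs ^ 2 = 2 ^ 2 := by
    rw [← Ideal.absNorm_span_singleton, ← map_pow, hQ,
      Ideal.absNorm_span_singleton, norm_two_eq_four hω hK]
    rfl
  exact natAbs_norm_ne_two hω hK α (Nat.pow_left_injective two_ne_zero h4)

end SqrtNegSeventeen

/-- The ideal `𝔮 = (2, 1+ω)` of `𝓞_K`, `K = ℚ(√−17)`, satisfies `𝔮² = (2)` (so `2` ramifies),
and its ideal class has order exactly `2` in the class group; in particular this class is a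
square in `Cl(K)`. -/
theorem ideal_two_one_add_omega_order_two
    (K : Type*) [Field K] [NumberField K] (ω : K)
    (hω : ω ^ 2 = -17) (hK : Algebra.adjoin ℚ {ω} = ⊤)
    (ζ : 𝓞 K) (hζ : (ζ : K) = ω)
    (Q : Ideal (𝓞 K)) (hQ : Q = Ideal.span {(2 : 𝓞 K), 1 + ζ})
    (hQ0 : Q ∈ (Ideal (𝓞 K))⁰) :
    Q ^ 2 = Ideal.span {(2 : 𝓞 K)} ∧
      orderOf (ClassGroup.mk0 ⟨Q, hQ0⟩) = 2 ∧
      IsSquare (ClassGroup.mk0 ⟨Q, hQ0⟩) := by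
  have hζ2 : ζ ^ 2 = -17 := RingOfIntegers.coe_injective (by push_cast [hζ]; exact hω)
  have hx : (1 + ζ) ^ 2 = 2 * (1 + ζ) - 18 := by linear_combination hζ2
  have hQ2 : Q ^ 2 = Ideal.span {2} := hQ ▸ Ideal.span_pair_two_sq hx
  have hP0 : Ideal.span {3, 1 + ζ} ∈ (Ideal (𝓞 K))⁰ :=
    mem_nonZeroDivisors_of_ne_zero (by simp)
  refine ⟨hQ2, ?_, ?_⟩
  · exact ClassGroup.orderOf_mk0_eq_two hQ0
      (SqrtNegSeventeen.not_isPrincipal_of_sq_eq_span_two hω hK hQ2) (hQ2 ▸ ⟨2, rfl⟩)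
  · apply ClassGroup.isSquare_mk0_of_sq_mul_isPrincipal hQ0 hP0
    rw [hQ, Ideal.span_pair_three_sq_mul_span_pair_two hx]
    exact ⟨1 + ζ, rfl⟩
end

section
/- The quadratic extension L = ℚ(√−17, √−1) of K = ℚ(√−17) is unramified at all finite primes of K: the relative different ideal of 𝓞_L over 𝓞_K is the unit ideal (equivalently, every nonzero prime ideal of 𝓞_K has ramification index 1 in 𝓞_L). -/
/-!
For `ω² = -(4k+1)` the element `θ = (1 + ωi)/2` is a root of `X² - X - k`, so it is integral,
and like `i` it generates `L/K`. Each generator contributes the derivative of its minimal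
polynomial to the different: `2i` and `2θ - 1`. Since `(2θ - 1)² + k(2i)² = 1`, the different
is the unit ideal. A prime `P` of ramification index `e ≥ 2` would divide the different,
because `P^(e-1)` always does.
-/

open NumberField Polynomial

theorem Ideal.eq_top_of_two_mul_mem_of_two_mul_sub_one_mem {R : Type*} [CommRing R]
    {I : Ideal R} {i θ : R} (k : ℤ) (hi : i ^ 2 = -1) (hθ : θ ^ 2 - θ - k = 0)
    (hi_mem : 2 * i ∈ I) (hθ_mem : 2 * θ - 1 ∈ I) : I = ⊤ := by
  have h : (2 * θ - 1) * (2 * θ - 1) + (k * (2 * i)) * (2 * i) = 1 := by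
    linear_combination 4 * hθ + 4 * k * hi
  rw [Ideal.eq_top_iff_one, ← h]
  exact add_mem (I.mul_mem_left _ hθ_mem) (I.mul_mem_left _ hi_mem)

section Different

variable {A K L B : Type*} [CommRing A] [Field K] [CommRing B] [Field L] [Algebra A K]
  [Algebra B L] [Algebra A B] [Algebra K L] [Algebra A L] [IsScalarTower A K L]
  [IsScalarTower A B L] [IsDomain A] [IsFractionRing A K] [IsIntegrallyClosed A]
  [FiniteDimensional K L]

theorem minpoly_eq_of_monic_of_natDegree_le [IsDomain B] [Module.IsTorsionFree A B]
    {x : B} (hx : Algebra.adjoin K {algebraMap B L x} = ⊤) {f : A[X]} (hf : f.Monic)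
    (hfx : aeval x f = 0) (hdeg : f.natDegree ≤ Module.finrank K L) :
    minpoly A x = f := by
  have hint : IsIntegral A x := ⟨f, hf, by rwa [← aeval_def]⟩
  have hgen : IntermediateField.adjoin K {algebraMap B L x} = ⊤ :=
    IntermediateField.adjoin_eq_top_of_algebra K _ hx
  have hnat : (minpoly A x).natDegree = Module.finrank K L := by
    rw [← (Field.primitive_element_iff_minpoly_natDegree_eq K _).mp hgen,
      minpoly.isIntegrallyClosed_eq_field_fractions K L hint,
      natDegree_map_eq_of_injective (IsFractionRing.injective A K)]
  exact eq_of_dvd_of_natDegree_le_of_leadingCoeff (minpoly.isIntegrallyClosed_dvd hint hfx)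
    (hdeg.trans hnat.ge) (by rw [(minpoly.monic hint).leadingCoeff, hf.leadingCoeff])

theorem aeval_derivative_mem_differentIdeal_of_monic [IsDedekindDomain B]
    [Module.IsTorsionFree A B] [Algebra.IsSeparable K L] [IsIntegralClosure B A L]
    {x : B} (hx : Algebra.adjoin K {algebraMap B L x} = ⊤) {f : A[X]} (hf : f.Monic)
    (hfx : aeval x f = 0) (hdeg : f.natDegree ≤ Module.finrank K L) :
    aeval x (derivative f) ∈ differentIdeal A B := by
  rw [← minpoly_eq_of_monic_of_natDegree_le hx hf hfx hdeg]
  exact aeval_derivative_mem_differentIdeal A K L x hx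

end Different

attribute [local instance] FractionRing.liftAlgebra

theorem Ideal.ramificationIdx'_eq_one_of_differentIdeal_eq_top {A B : Type*} [CommRing A]
    [CommRing B] [Algebra A B] [IsDedekindDomain A] [IsDedekindDomain B]
    [Module.IsTorsionFree A B] [Module.Finite A B]
    [Algebra.IsSeparable (FractionRing A) (FractionRing B)]
    (h : differentIdeal A B = ⊤) {p : Ideal A} [p.IsMaximal] (hp : p ≠ ⊥) {P : Ideal B}
    [P.IsPrime] (hpP : p.map (algebraMap A B) ≤ P) :
    ramificationIdx' p P = 1 := by
  by_contra hne
  have hP2 : p.map (algebraMap A B) ≤ P ^ 2 := (ramificationIdx'_ne_one_iff hpP).mp hne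
  have hP : P ∣ differentIdeal A B := by
    simpa using pow_sub_one_dvd_differentIdeal A P 2 hp (Ideal.dvd_iff_le.mpr hP2)
  rw [h, Ideal.dvd_iff_le, top_le_iff] at hP
  exact IsPrime.ne_top ‹_› hP

section Quadratic

variable {K L : Type*} [Field K] [NumberField K] [Field L] [NumberField L] [Algebra K L]

theorem differentIdeal_eq_top_of_generators (hdeg : Module.finrank K L = 2) (k : ℤ)
    {i θ : 𝓞 L} (hi : i ^ 2 = -1) (hθ : θ ^ 2 - θ - k = 0)
    (hi_gen : Algebra.adjoin K {algebraMap (𝓞 L) L i} = ⊤)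
    (hθ_gen : Algebra.adjoin K {algebraMap (𝓞 L) L θ} = ⊤) :
    differentIdeal (𝓞 K) (𝓞 L) = ⊤ := by
  have h₁ : aeval i (derivative (X ^ 2 + 1 : (𝓞 K)[X])) ∈ differentIdeal (𝓞 K) (𝓞 L) :=
    aeval_derivative_mem_differentIdeal_of_monic hi_gen (by monicity!) (by simp [hi])
      (by rw [hdeg]; compute_degree!)
  have h₂ : aeval θ (derivative (X ^ 2 - X - C (k : 𝓞 K))) ∈ differentIdeal (𝓞 K) (𝓞 L) :=
    aeval_derivative_mem_differentIdeal_of_monic hθ_gen (by monicity!) (by simpa using hθ)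
      (by rw [hdeg]; compute_degree!)
  simp only [derivative_add, derivative_X_sq, derivative_one, add_zero, map_mul, aeval_X,
    map_ofNat] at h₁
  simp only [derivative_X_sq, derivative_X, derivative_C, sub_zero, map_sub, map_mul, aeval_X,
    map_ofNat, map_one] at h₂
  exact Ideal.eq_top_of_two_mul_mem_of_two_mul_sub_one_mem k hi hθ h₁ h₂

theorem differentIdeal_eq_top_of_adjoin_sqrt_neg_one (hdeg : Module.finrank K L = 2) (k : ℤ)
    {ω : K} (hω : ω ^ 2 = -(4 * k + 1)) {i : L} (hi : i ^ 2 = -1)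
    (hL : Algebra.adjoin K {i} = ⊤) :
    differentIdeal (𝓞 K) (𝓞 L) = ⊤ := by
  have hω0 : ω ≠ 0 := by
    have : (4 * k + 1 : K) ≠ 0 := by exact_mod_cast (by omega : 4 * k + 1 ≠ 0)
    rintro rfl
    exact this (by linear_combination hω)
  set w : L := algebraMap K L ω
  have hw : w ^ 2 = -(4 * k + 1) := by rw [← map_pow, hω]; simp [map_ofNat]
  obtain ⟨θ, hθ_def⟩ : ∃ θ : L, 2 * θ - 1 = w * i := ⟨(1 + w * i) / 2, by ring⟩
  have hθ : θ ^ 2 - θ - k = 0 := by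
    linear_combination ((2 * θ - 1 + w * i) * hθ_def + i ^ 2 * hw - (4 * k + 1) * hi) / 4
  have hθ_gen : Algebra.adjoin K {θ} = ⊤ := by
    have hi_eq : i = algebraMap K L ω⁻¹ * (2 * θ - 1) := by
      rw [map_inv₀, hθ_def, inv_mul_cancel_left₀ ((_root_.map_ne_zero _).mpr hω0)]
    rw [eq_top_iff, ← hL, Algebra.adjoin_le_iff, Set.singleton_subset_iff, SetLike.mem_coe, hi_eq]
    exact mul_mem (Subalgebra.algebraMap_mem _ _)
      (sub_mem (mul_mem (ofNat_mem _ 2) (Algebra.self_mem_adjoin_singleton K θ)) (one_mem _))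
  let iO : 𝓞 L := ⟨i, X ^ 2 + 1, monic_X_pow_add_C 1 two_ne_zero, by simp [hi]⟩
  let θO : 𝓞 L := ⟨θ, X ^ 2 - X - C k, by monicity!, by rw [← aeval_def]; simpa using hθ⟩
  exact differentIdeal_eq_top_of_generators hdeg k (i := iO) (θ := θO)
    (by ext; push_cast; exact hi) (by ext; push_cast; exact hθ) hL hθ_gen

end Quadratic

theorem genus_field_unramified_general
    (K : Type*) [Field K] [NumberField K] (ω : K)
    (hω : ω ^ 2 = -17)
    (L : Type*) [Field L] [NumberField L] [Algebra K L]
    (i : L) (hi : i ^ 2 = -1) (hL : Algebra.adjoin K {i} = ⊤)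
    (hdeg : Module.finrank K L = 2) :
    differentIdeal (𝓞 K) (𝓞 L) = ⊤ ∧
      ∀ p : Ideal (𝓞 K), p ≠ ⊥ → p.IsPrime →
        ∀ P : Ideal (𝓞 L), P.IsPrime →
          Ideal.comap (algebraMap (𝓞 K) (𝓞 L)) P = p →
            Ideal.ramificationIdx' p P = 1 := by
  have hdiff : differentIdeal (𝓞 K) (𝓞 L) = ⊤ :=
    differentIdeal_eq_top_of_adjoin_sqrt_neg_one hdeg 4 (by rw [hω]; norm_num) hi hL
  refine ⟨hdiff, fun p hp hp_prime P _ hPp => ?_⟩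
  have := hp_prime.isMaximal hp
  exact Ideal.ramificationIdx'_eq_one_of_differentIdeal_eq_top hdiff hp (hPp ▸ Ideal.map_comap_le)

/-- The quadratic extension `L = K(i)` of `K = ℚ(√−17)` is unramified at all finite primes:
the relative different ideal of `𝓞_L / 𝓞_K` is the unit ideal, equivalently every nonzero
prime of `𝓞_K` has ramification index `1` in `𝓞_L`. -/
theorem genus_field_unramified
    (K : Type*) [Field K] [NumberField K] (ω : K)
    (hω : ω ^ 2 = -17) (hK : Algebra.adjoin ℚ {ω} = ⊤)
    (L : Type*) [Field L] [NumberField L] [Algebra K L]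
    (i : L) (hi : i ^ 2 = -1) (hL : Algebra.adjoin K {i} = ⊤)
    (hdeg : Module.finrank K L = 2) :
    differentIdeal (𝓞 K) (𝓞 L) = ⊤ ∧
      ∀ p : Ideal (𝓞 K), p ≠ ⊥ → p.IsPrime →
        ∀ P : Ideal (𝓞 L), P.IsPrime →
          Ideal.comap (algebraMap (𝓞 K) (𝓞 L)) P = p →
            Ideal.ramificationIdx' p P = 1 :=
  genus_field_unramified_general K ω hω L i hi hL hdeg
end
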